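/- Let H be a connected simple graph with minimum degree at least 2 satisfying γ_dR(H) ≤ 12·n(H)/11, and let u ∈ V(H). Let G be the graph obtained from the disjoint union of H, a 5-cycle C_5 with vertices z_1,…,z_5, and C_{5,k} with vertices x_1,…,x_5, y_1,…,y_k (k ≥ 1, where x_1 is adjacent to y_1), by adding an edge joining x_1 to exactly one vertex of C_5 and adding the edge u y_k. Then γ_dR(G) ≤ 12·n(G)/11. -/

import Mathlib

/-- A double Roman dominating function on a simple graph `G`:
values in `{0,1,2,3}`, every vertex with value `0` has two neighbors with value `2`
or one neighbor with value `3`, and every vertex with value `1` has a neighbor with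
value at least `2`. -/
def IsDRDF {V : Type*} (G : SimpleGraph V) (f : V → ℕ) : Prop :=
  (∀ v, f v ≤ 3) ∧
  (∀ v, f v = 0 →
    (∃ u w, u ≠ w ∧ G.Adj v u ∧ G.Adj v w ∧ f u = 2 ∧ f w = 2) ∨ ∃ u, G.Adj v u ∧ f u = 3) ∧
  (∀ v, f v = 1 → ∃ u, G.Adj v u ∧ 2 ≤ f u)

/-- The double Roman domination number: the minimum weight of a DRDF. -/
noncomputable def gammaDR {V : Type*} [Fintype V] (G : SimpleGraph V) : ℕ :=
  sInf {w | ∃ f, IsDRDF G f ∧ ∑ v, f v = w}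

/-- Base relation for the graph `C_{m,k}`: a cycle `x_1 ⋯ x_m x_1` (here `Fin m`, with
`x_1` being `0`), a path `y_1 ⋯ y_k` (here `Fin k`, with `y_1` being `0` and `y_k` being
`k-1`), together with the edge `x_1 y_1`. -/
def cmkR (m k : ℕ) : (Fin m ⊕ Fin k) → (Fin m ⊕ Fin k) → Prop
  | .inl u, .inl v => (u.val + 1) % m = v.val
  | .inr i, .inr j => i.val + 1 = j.val
  | .inl u, .inr j => u.val = 0 ∧ j.val = 0
  | .inr _, .inl _ => False

/-- The graph `C_{m,k}`. -/
def Cmk (m k : ℕ) : SimpleGraph (Fin m ⊕ Fin k) := SimpleGraph.fromRel (cmkR m k)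
/-- Base relation for the graph obtained from the disjoint union of `H`, a `5`-cycle
`C_5` with vertices `z_1, …, z_5` (the first `Fin 5` summand, `z_1` being `0`), and
`C_{5,k}` with vertices `x_1, …, x_5, y_1, …, y_k` (the `Fin 5 ⊕ Fin k` summand),
by adding an edge joining `x_1` to exactly one vertex of `C_5` (namely `z_1`) and the
edge `u y_k`. -/
def join55R {V : Type*} (H : SimpleGraph V) (u : V) (k : ℕ) :
    (V ⊕ (Fin 5 ⊕ (Fin 5 ⊕ Fin k))) → (V ⊕ (Fin 5 ⊕ (Fin 5 ⊕ Fin k))) → Prop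
  | .inl a, .inl b => H.Adj a b
  | .inr (.inl a), .inr (.inl b) => (a.val + 1) % 5 = b.val
  | .inr (.inr a), .inr (.inr b) => cmkR 5 k a b
  | .inr (.inr (.inl x)), .inr (.inl z) => x.val = 0 ∧ z.val = 0
  | .inl a, .inr (.inr (.inr j)) => a = u ∧ j.val + 1 = k
  | _, _ => False

/-- The graph obtained from the disjoint union of `H`, a `5`-cycle `C_5` and
`C_{5,k}`, by joining `x_1` to exactly one vertex of `C_5` and joining `u` to
`y_k`. -/
def join55 {V : Type*} (H : SimpleGraph V) (u : V) (k : ℕ) :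
    SimpleGraph (V ⊕ (Fin 5 ⊕ (Fin 5 ⊕ Fin k))) :=
  SimpleGraph.fromRel (join55R H u k)

/-!
Extend a minimum double Roman dominating function of `H` by a fixed labelling of the
`10 + k` new vertices of weight at most `11 + k`: `0, 0, 3, 0, 2` on `z₁, …, z₅`
(`z₁` is dominated by `x₁`), `3, 0, 3, 0, 0` on `x₁, …, x₅`, and on the path
`x₁ y₁ ⋯ y_k` a `3` on every third vertex. Every new vertex is then labelled at least `2`
or has a neighbour labelled `3`, so `γ_dR(G) ≤ γ_dR(H) + 11 + k`, and
`12 n(H) / 11 + 11 + k ≤ 12 (n(H) + 10 + k) / 11` because `k ≥ 1`.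
-/

open SimpleGraph Finset

section DoubleRomanDomination

variable {V W : Type*}

def IsDRDFAt (G : SimpleGraph V) (f : V → ℕ) (v : V) : Prop :=
  f v ≤ 3 ∧
  (f v = 0 →
    (∃ a b, a ≠ b ∧ G.Adj v a ∧ G.Adj v b ∧ f a = 2 ∧ f b = 2) ∨ ∃ a, G.Adj v a ∧ f a = 3) ∧
  (f v = 1 → ∃ a, G.Adj v a ∧ 2 ≤ f a)

theorem isDRDF_iff_forall_isDRDFAt {G : SimpleGraph V} {f : V → ℕ} :
    IsDRDF G f ↔ ∀ v, IsDRDFAt G f v :=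
  ⟨fun ⟨h3, h0, h1⟩ v => ⟨h3 v, h0 v, h1 v⟩,
    fun h => ⟨fun v => (h v).1, fun v => (h v).2.1, fun v => (h v).2.2⟩⟩

theorem isDRDFAt_of_two_le {G : SimpleGraph V} {f : V → ℕ} {v : V} (h2 : 2 ≤ f v)
    (h3 : f v ≤ 3) : IsDRDFAt G f v :=
  ⟨h3, by omega, by omega⟩

theorem isDRDFAt_of_adj {G : SimpleGraph V} {f : V → ℕ} {v w : V} (hv : f v ≤ 3)
    (hvw : G.Adj v w) (hw : f w = 3) : IsDRDFAt G f v :=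
  ⟨hv, fun _ => .inr ⟨w, hvw, hw⟩, fun _ => ⟨w, hvw, by omega⟩⟩

theorem IsDRDFAt.map {G : SimpleGraph V} {G' : SimpleGraph W} (φ : G →g G')
    (hφ : Function.Injective φ) {f : W → ℕ} {v : V} (h : IsDRDFAt G (f ∘ φ) v) :
    IsDRDFAt G' f (φ v) := by
  obtain ⟨h3, h0, h1⟩ := h
  refine ⟨h3, fun hv => ?_, fun hv => ?_⟩
  · rcases h0 hv with ⟨a, b, hab, ha, hb, ha2, hb2⟩ | ⟨a, ha, ha3⟩
    · exact .inl ⟨φ a, φ b, hφ.ne hab, φ.map_adj ha, φ.map_adj hb, ha2, hb2⟩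
    · exact .inr ⟨φ a, φ.map_adj ha, ha3⟩
  · obtain ⟨a, ha, ha2⟩ := h1 hv
    exact ⟨φ a, φ.map_adj ha, ha2⟩

variable [Fintype V]

theorem gammaDR_le_sum {G : SimpleGraph V} {f : V → ℕ} (hf : IsDRDF G f) :
    gammaDR G ≤ ∑ v, f v :=
  Nat.sInf_le ⟨f, hf, rfl⟩

theorem exists_isDRDF_sum_eq_gammaDR (G : SimpleGraph V) :
    ∃ f, IsDRDF G f ∧ ∑ v, f v = gammaDR G :=
  Nat.sInf_mem (s := {w | ∃ f, IsDRDF G f ∧ ∑ v, f v = w})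
    ⟨_, fun _ => 3,
      isDRDF_iff_forall_isDRDFAt.2 fun _ => isDRDFAt_of_two_le (by norm_num) le_rfl, rfl⟩

end DoubleRomanDomination

section PathGraph

/-- The last vertex gets `2` exactly when it is `2 (mod 3)` and so has no neighbour
labelled `3`. -/
def pathPattern (n i : ℕ) : ℕ :=
  if 3 ∣ i then 3 else if i + 1 = n ∧ 3 ∣ n then 2 else 0

theorem pathPattern_le_three (n i : ℕ) : pathPattern n i ≤ 3 := by
  unfold pathPattern; split_ifs <;> omega

theorem isDRDF_pathGraph_pathPattern (n : ℕ) :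
    IsDRDF (pathGraph n) (fun i => pathPattern n i) := by
  refine isDRDF_iff_forall_isDRDFAt.2 fun i => ?_
  by_cases h2 : 2 ≤ pathPattern n i
  · exact isDRDFAt_of_two_le h2 (pathPattern_le_three n i)
  have hi : ¬ 3 ∣ i.val ∧ ¬(i.val + 1 = n ∧ 3 ∣ n) := by
    unfold pathPattern at h2; split_ifs at h2 <;> omega
  rcases (by omega : i.val % 3 = 1 ∨ i.val % 3 = 2) with h | h
  · refine isDRDFAt_of_adj (pathPattern_le_three n i) (w := ⟨i - 1, by omega⟩)
      (pathGraph_adj.2 (.inr (by simp; omega))) ?_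
    simp only [pathPattern]; split_ifs <;> omega
  · refine isDRDFAt_of_adj (pathPattern_le_three n i) (w := ⟨i + 1, by omega⟩)
      (pathGraph_adj.2 (.inl rfl)) ?_
    simp only [pathPattern]; split_ifs <;> omega

theorem sum_range_pathPattern_succ_le (n : ℕ) :
    ∑ j ∈ range n, pathPattern (n + 1) (j + 1) ≤ n := by
  rcases n with _ | m
  · simp
  have hinit : ∑ j ∈ range m, pathPattern (m + 2) (j + 1) = m / 3 * 3 := by
    rw [← Nat.card_multiples, ← smul_eq_mul, ← sum_const, sum_filter]
    refine sum_congr rfl fun j hj => ?_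
    have := mem_range.1 hj
    simp only [pathPattern]; split_ifs <;> omega
  rw [sum_range_succ, hinit]
  simp only [pathPattern]; split_ifs <;> omega

end PathGraph

section Join55

variable {V : Type*} (H : SimpleGraph V) (u : V) (k : ℕ)

/-- `y_j` (index `j`) is vertex `j + 1` of the path `x₁ y₁ ⋯ y_k`, whose vertex `0` is `x₁`. -/
def gadgetLabel (k : ℕ) : Fin 5 ⊕ (Fin 5 ⊕ Fin k) → ℕ
  | .inl z => ![0, 0, 3, 0, 2] z
  | .inr (.inl x) => ![3, 0, 3, 0, 0] x
  | .inr (.inr j) => pathPattern (k + 1) (j + 1)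

theorem gadgetLabel_le_three (v : Fin 5 ⊕ (Fin 5 ⊕ Fin k)) : gadgetLabel k v ≤ 3 := by
  rcases v with z | x | j
  · fin_cases z <;> simp [gadgetLabel]
  · fin_cases x <;> simp [gadgetLabel]
  · exact pathPattern_le_three _ _

theorem sum_gadgetLabel_le : ∑ v, gadgetLabel k v ≤ 11 + k := by
  have hy : ∑ j : Fin k, pathPattern (k + 1) (j + 1) ≤ k := by
    simpa only [Fin.sum_univ_eq_sum_range (fun j => pathPattern (k + 1) (j + 1))]
      using sum_range_pathPattern_succ_le k
  have hfixed : ∑ z : Fin 5, ![0, 0, 3, 0, 2] z + ∑ x : Fin 5, ![3, 0, 3, 0, 0] x = 11 := by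
    simp [Fin.sum_univ_five]
  simp only [Fintype.sum_sum_type, gadgetLabel]
  omega

def join55InlHom : H →g join55 H u k where
  toFun := Sum.inl
  map_rel' h := by simpa [join55, join55R] using ⟨h.ne, .inl h⟩

def join55TailPath : Fin (k + 1) → V ⊕ (Fin 5 ⊕ (Fin 5 ⊕ Fin k)) :=
  Fin.cases (.inr (.inr (.inl 0))) fun j => .inr (.inr (.inr j))

theorem join55_adj_join55TailPath {i j : Fin (k + 1)} (hij : i.val + 1 = j.val) :
    (join55 H u k).Adj (join55TailPath k i) (join55TailPath k j) := by
  cases i using Fin.cases <;> cases j using Fin.cases <;>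
    simp_all [join55TailPath, join55, join55R, cmkR, Fin.ext_iff]
  omega

def join55PathHom : pathGraph (k + 1) →g join55 H u k where
  toFun := join55TailPath k
  map_rel' h := (pathGraph_adj.1 h).elim (join55_adj_join55TailPath H u k)
    fun h => (join55_adj_join55TailPath H u k h).symm

theorem join55PathHom_injective : Function.Injective (join55PathHom H u k) := by
  intro i j h
  cases i using Fin.cases <;> cases j using Fin.cases <;> simp_all [join55PathHom, join55TailPath]

theorem sumElim_gadgetLabel_comp_join55PathHom (f : V → ℕ) :
    Sum.elim f (gadgetLabel k) ∘ join55PathHom H u k =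
      fun i : Fin (k + 1) => pathPattern (k + 1) i := by
  funext i
  cases i using Fin.cases <;> simp [join55PathHom, join55TailPath, gadgetLabel, pathPattern]

theorem isDRDF_join55 {f : V → ℕ} (hf : IsDRDF H f) :
    IsDRDF (join55 H u k) (Sum.elim f (gadgetLabel k)) := by
  have hpath := isDRDF_iff_forall_isDRDFAt.1 (isDRDF_pathGraph_pathPattern (k + 1))
  rw [← sumElim_gadgetLabel_comp_join55PathHom H u k f] at hpath
  rw [isDRDF_iff_forall_isDRDFAt] at hf ⊢
  have h3 (v) : Sum.elim f (gadgetLabel k) (.inr v) ≤ 3 := gadgetLabel_le_three k v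
  rintro (a | z | x | j)
  · exact (hf a).map (f := Sum.elim f (gadgetLabel k)) (join55InlHom H u k) Sum.inl_injective
  · fin_cases z
    · exact isDRDFAt_of_adj (w := .inr (.inr (.inl 0))) (h3 _) (by simp [join55, join55R]) rfl
    · exact isDRDFAt_of_adj (w := .inr (.inl 2)) (h3 _) (by simp [join55, join55R]) rfl
    · exact isDRDFAt_of_two_le (by simp [gadgetLabel]) (h3 _)
    · exact isDRDFAt_of_adj (w := .inr (.inl 2)) (h3 _) (by simp [join55, join55R]) rfl
    · exact isDRDFAt_of_two_le (by simp [gadgetLabel]) (h3 _)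
  · fin_cases x
    · exact isDRDFAt_of_two_le (by simp [gadgetLabel]) (h3 _)
    · exact isDRDFAt_of_adj (w := .inr (.inr (.inl 0))) (h3 _) (by simp [join55, join55R, cmkR]) rfl
    · exact isDRDFAt_of_two_le (by simp [gadgetLabel]) (h3 _)
    · exact isDRDFAt_of_adj (w := .inr (.inr (.inl 2))) (h3 _) (by simp [join55, join55R, cmkR]) rfl
    · exact isDRDFAt_of_adj (w := .inr (.inr (.inl 0))) (h3 _) (by simp [join55, join55R, cmkR]) rfl
  · exact (hpath j.succ).map (join55PathHom H u k) (join55PathHom_injective H u k)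

end Join55

theorem gammaDR_join55_le_general {V : Type*} [Fintype V] (H : SimpleGraph V)
    (hH : (gammaDR H : ℚ) ≤ 12 * (Fintype.card V) / 11)
    (u : V) (k : ℕ) (hk : 1 ≤ k) :
    (gammaDR (join55 H u k) : ℚ) ≤
      12 * (Fintype.card (V ⊕ (Fin 5 ⊕ (Fin 5 ⊕ Fin k)))) / 11 := by
  obtain ⟨f, hf, hsum⟩ := exists_isDRDF_sum_eq_gammaDR H
  have hG : gammaDR (join55 H u k) ≤ gammaDR H + (11 + k) :=
    calc gammaDR (join55 H u k) ≤ ∑ v, Sum.elim f (gadgetLabel k) v :=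
          gammaDR_le_sum (isDRDF_join55 H u k hf)
      _ = gammaDR H + ∑ v, gadgetLabel k v := by
          simp only [Fintype.sum_sum_type, Sum.elim_inl, Sum.elim_inr, hsum]
      _ ≤ gammaDR H + (11 + k) := by gcongr; exact sum_gadgetLabel_le k
  have hGq : (gammaDR (join55 H u k) : ℚ) ≤ gammaDR H + (11 + k) := by exact_mod_cast hG
  have hkq : (1 : ℚ) ≤ k := by exact_mod_cast hk
  push_cast [Fintype.card_sum, Fintype.card_fin]
  linarith

/-- If `H` is a connected graph with minimum degree at least `2` satisfying
`γ_dR(H) ≤ 12 n(H) / 11`, `u ∈ V(H)`, and `G` is obtained from the disjoint union of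
`H`, a `5`-cycle `C_5` and `C_{5,k}` (`k ≥ 1`) by joining `x_1` to exactly one vertex
of `C_5` and joining `u` to `y_k`, then `γ_dR(G) ≤ 12 n(G) / 11`. -/
theorem gammaDR_join55_le {V : Type*} [Fintype V] (H : SimpleGraph V)
    (hconn : H.Connected) (hdeg : ∀ v, 2 ≤ {w | H.Adj v w}.ncard)
    (hH : (gammaDR H : ℚ) ≤ 12 * (Fintype.card V) / 11)
    (u : V) (k : ℕ) (hk : 1 ≤ k) :
    (gammaDR (join55 H u k) : ℚ) ≤
      12 * (Fintype.card (V ⊕ (Fin 5 ⊕ (Fin 5 ⊕ Fin k)))) / 11 :=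
  gammaDR_join55_le_general H hH u k hk
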